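/- In a signaling game, every PCE is a Nash equilibrium satisfying the compatibility criterion: for every PCE σ* and every receiver pure plan assigned positive probability under σ*_2, and every signal s, the action the plan prescribes after s best responds to some belief p ∈ Δ(Θ) over sender types satisfying p(θ)/p(θ') ≥ λ(θ)/λ(θ') whenever sending s as type θ is more compatible than as type θ'. -/

import Mathlib

/-!
Along the sequence of ε-equilibria defining the PCE, a signal that is not optimal for a sender
type is sent only with its tremble probability. If `s` is more type-compatible with `θ` than with
`θ'`, then either `s` is optimal for `θ'`, hence strictly optimal for `θ`, and `θ` sends `s` with
probability `1 - ∑_{x ≠ s} ε(θ, x)`; or `θ'` sends `s` only by tremble, and player compatibility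
bounds that tremble by `θ`'s tremble on `s`. Either way `σ(θ', s) (1 - o(1)) ≤ σ(θ, s)`, so the
Bayesian posteriors after `s` satisfy the ratio inequality up to a vanishing factor, and a limit
point `p` of them satisfies it exactly. A receiver plan of positive limit weight is played above its
tremble, so it best responds to every posterior along the sequence, hence to `p`.
-/

open scoped Classical

noncomputable section

section GenericGame

variable {ι : Type} [Fintype ι] [DecidableEq ι] {S : ι → Type} [∀ i, Fintype (S i)]

/-- A full-support correlated strategy profile. -/
def FullSupport (σ : (∀ i, S i) → ℝ) : Prop :=
  (∀ s, 0 < σ s) ∧ ∑ s, σ s = 1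

/-- Expected payoff to player `i` from playing `si` against the correlated profile `σ`. -/
def expPay (U : ι → (∀ j, S j) → ℝ) (i : ι) (si : S i) (σ : (∀ j, S j) → ℝ) : ℝ :=
  ∑ s, σ s * U i (Function.update s i si)

/-- Equality of marginals on the players other than `i` and `j`. -/
def SameMarginal (i j : ι) (σ τ : (∀ k, S k) → ℝ) : Prop :=
  ∀ s : ∀ k, S k,
    (∑ si : S i, ∑ sj : S j, σ (Function.update (Function.update s i si) j sj)) =
    (∑ si : S i, ∑ sj : S j, τ (Function.update (Function.update s i si) j sj))

/-- Player compatibility. -/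
def MoreCompatible (U : ι → (∀ j, S j) → ℝ) (i j : ι) (si : S i) (sj : S j) : Prop :=
  ∀ σ : (∀ k, S k) → ℝ, FullSupport σ →
    (∀ sj' : S j, expPay U j sj' σ ≤ expPay U j sj σ) →
    ∀ τ : (∀ k, S k) → ℝ, FullSupport τ → SameMarginal i j σ τ →
      ∀ si' : S i, si' ≠ si → expPay U i si' τ < expPay U i si τ

/-- Expected payoff under an independent mixed strategy profile. -/
def profPay (U : ι → (∀ j, S j) → ℝ) (i : ι) (μ : ∀ j, S j → ℝ) : ℝ :=
  ∑ s : ∀ j, S j, (∏ j, μ j (s j)) * U i s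

def InTrembleSet (ε : ∀ i, S i → ℝ) (i : ι) (μi : S i → ℝ) : Prop :=
  (∑ si, μi si = 1) ∧ ∀ si, ε i si ≤ μi si

def IsEpsEquilibrium (U : ι → (∀ j, S j) → ℝ) (ε : ∀ i, S i → ℝ) (μ : ∀ i, S i → ℝ) : Prop :=
  (∀ i, InTrembleSet ε i (μ i)) ∧
  ∀ (i : ι) (τi : S i → ℝ), InTrembleSet ε i τi →
    profPay U i (Function.update μ i τi) ≤ profPay U i μ

def PlayerCompatibleTremble (U : ι → (∀ j, S j) → ℝ) (ε : ∀ i, S i → ℝ) : Prop :=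
  (∀ i si, 0 < ε i si) ∧
  ∀ (i j : ι) (si : S i) (sj : S j), i ≠ j → MoreCompatible U i j si sj → ε j sj ≤ ε i si

def IsPCE (U : ι → (∀ j, S j) → ℝ) (σstar : ∀ i, S i → ℝ) : Prop :=
  ∃ (ε : ℕ → ∀ i, S i → ℝ) (σ : ℕ → ∀ i, S i → ℝ),
    (∀ t, PlayerCompatibleTremble U (ε t)) ∧
    (∀ i si, Filter.Tendsto (fun t => ε t i si) Filter.atTop (nhds 0)) ∧
    (∀ t, IsEpsEquilibrium U (ε t) (σ t)) ∧
    (∀ i si, Filter.Tendsto (fun t => σ t i si) Filter.atTop (nhds (σstar i si)))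

/-- Mixed Nash equilibrium. -/
def IsNash (U : ι → (∀ j, S j) → ℝ) (μ : ∀ i, S i → ℝ) : Prop :=
  (∀ i, (∀ si, 0 ≤ μ i si) ∧ ∑ si, μ i si = 1) ∧
  ∀ (i : ι) (τi : S i → ℝ), (∀ si, 0 ≤ τi si) → (∑ si, τi si = 1) →
    profPay U i (Function.update μ i τi) ≤ profPay U i μ

end GenericGame

section PiSplitAt

variable {ι : Type} [DecidableEq ι] {S : ι → Type}

theorem sum_piSplitAt [Fintype ι] [∀ i, Fintype (S i)] (i : ι) (f : (∀ j, S j) → ℝ) :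
    ∑ s, f s
      = ∑ x : S i, ∑ r : ∀ j : {j // j ≠ i}, S j, f ((Equiv.piSplitAt i S).symm (x, r)) := by
  rw [← Equiv.sum_comp (Equiv.piSplitAt i S).symm, Fintype.sum_prod_type]

theorem update_piSplitAt_symm (i : ι) (x y : S i) (r : ∀ j : {j // j ≠ i}, S j) :
    Function.update ((Equiv.piSplitAt i S).symm (x, r)) i y
      = (Equiv.piSplitAt i S).symm (y, r) := by
  funext j
  by_cases h : j = i
  · subst h; simp
  · simp [h]

theorem prod_piSplitAt_symm [Fintype ι] (i : ι) (ν : ∀ j, S j → ℝ) (x : S i)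
    (r : ∀ j : {j // j ≠ i}, S j) :
    ∏ j, ν j ((Equiv.piSplitAt i S).symm (x, r) j) = ν i x * ∏ j : {j // j ≠ i}, ν j (r j) := by
  rw [Fintype.prod_eq_mul_prod_subtype_ne _ i]
  congr 1
  · simp
  · exact Finset.prod_congr rfl fun j _ => by simp [j.2]

end PiSplitAt

section ProductProfiles

variable {ι : Type} [Fintype ι] [DecidableEq ι] {S : ι → Type} [∀ i, Fintype (S i)]

def prodMix (μ : ∀ j, S j → ℝ) : (∀ j, S j) → ℝ := fun s => ∏ j, μ j (s j)

theorem sum_prodMix_mul_eq_sum_piSplitAt (μ : ∀ j, S j → ℝ) (i : ι) (f : (∀ j, S j) → ℝ) :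
    ∑ s, prodMix μ s * f s = ∑ x : S i, μ i x * ∑ r : ∀ j : {j // j ≠ i}, S j,
      (∏ j : {j // j ≠ i}, μ j (r j)) * f ((Equiv.piSplitAt i S).symm (x, r)) := by
  simp only [sum_piSplitAt i, prodMix, prod_piSplitAt_symm, Finset.mul_sum, mul_assoc]

theorem sum_prodMix (μ : ∀ j, S j → ℝ) (hμ : ∀ j, ∑ x, μ j x = 1) : ∑ s, prodMix μ s = 1 := by
  simp only [prodMix, ← Fintype.prod_sum, hμ, Finset.prod_const_one]

theorem fullSupport_prodMix (μ : ∀ j, S j → ℝ) (hpos : ∀ j x, 0 < μ j x)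
    (hμ : ∀ j, ∑ x, μ j x = 1) : FullSupport (prodMix μ) :=
  ⟨fun _ => Finset.prod_pos fun j _ => hpos j _, sum_prodMix μ hμ⟩

theorem sum_prodMix_mul_apply (μ : ∀ j, S j → ℝ) (hμ : ∀ j, ∑ x, μ j x = 1) (k : ι)
    (g : S k → ℝ) : ∑ s, prodMix μ s * g (s k) = ∑ x, μ k x * g x := by
  have hrest : ∑ r : ∀ j : {j // j ≠ k}, S j, ∏ j : {j // j ≠ k}, μ j (r j) = 1 := by
    rw [← Fintype.prod_sum]; exact Finset.prod_eq_one fun j _ => hμ j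
  simp [sum_prodMix_mul_eq_sum_piSplitAt μ k, ← Finset.sum_mul, hrest]

theorem expPay_prodMix (U : ι → (∀ j, S j) → ℝ) (i : ι) (x : S i) (μ : ∀ j, S j → ℝ)
    (hμ : ∑ y, μ i y = 1) :
    expPay U i x (prodMix μ) = ∑ r : ∀ j : {j // j ≠ i}, S j,
      (∏ j : {j // j ≠ i}, μ j (r j)) * U i ((Equiv.piSplitAt i S).symm (x, r)) := by
  simp only [expPay, sum_prodMix_mul_eq_sum_piSplitAt μ i, update_piSplitAt_symm,
    ← Finset.sum_mul, hμ, one_mul]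

theorem profPay_update (U : ι → (∀ j, S j) → ℝ) (i : ι) (μ : ∀ j, S j → ℝ)
    (hμ : ∑ y, μ i y = 1) (τ : S i → ℝ) :
    profPay U i (Function.update μ i τ) = ∑ x, τ x * expPay U i x (prodMix μ) := by
  have hrest : ∀ r : ∀ j : {j // j ≠ i}, S j,
      ∏ j : {j // j ≠ i}, Function.update μ i τ j (r j) = ∏ j : {j // j ≠ i}, μ j (r j) :=
    fun r => Finset.prod_congr rfl fun j _ => by rw [Function.update_of_ne j.2]
  change ∑ s, prodMix (Function.update μ i τ) s * U i s = _
  simp only [sum_prodMix_mul_eq_sum_piSplitAt _ i, hrest, Function.update_self,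
    expPay_prodMix U i _ μ hμ]

theorem profPay_eq_sum (U : ι → (∀ j, S j) → ℝ) (i : ι) (μ : ∀ j, S j → ℝ)
    (hμ : ∑ y, μ i y = 1) : profPay U i μ = ∑ x, μ i x * expPay U i x (prodMix μ) := by
  conv_lhs => rw [← Function.update_eq_self i μ]
  exact profPay_update U i μ hμ (μ i)

end ProductProfiles

section EpsEquilibrium

variable {ι : Type} [Fintype ι] [DecidableEq ι] {S : ι → Type} [∀ i, Fintype (S i)]
  {U : ι → (∀ j, S j) → ℝ}

theorem IsEpsEquilibrium.expPay_le_of_lt {ε μ : ∀ i, S i → ℝ} (h : IsEpsEquilibrium U ε μ)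
    {i : ι} {si : S i} (hlt : ε i si < μ i si) (si' : S i) :
    expPay U i si' (prodMix μ) ≤ expPay U i si (prodMix μ) := by
  have hμ : ∑ x, μ i x = 1 := (h.1 i).1
  set e : S i → ℝ := fun x => expPay U i x (prodMix μ)
  set δ := μ i si - ε i si
  -- shift the mass `δ` that `si` carries above its tremble onto `si'`
  let τ : S i → ℝ := μ i + Pi.single si' δ - Pi.single si δ
  have hτ : InTrembleSet ε i τ := by
    refine ⟨by simp [τ, Finset.sum_add_distrib, Finset.sum_sub_distrib, hμ], fun x => ?_⟩
    have hx := (h.1 i).2 x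
    simp only [τ, Pi.add_apply, Pi.sub_apply, Pi.single_apply]
    split_ifs <;> subst_vars <;> linarith
  have hgain : ∑ x, τ x * e x = ∑ x, μ i x * e x + δ * (e si' - e si) := by
    simp only [τ, Pi.sub_apply, Pi.add_apply, Pi.single_apply, sub_mul, add_mul, ite_mul,
      zero_mul, Finset.sum_sub_distrib, Finset.sum_add_distrib, Finset.sum_ite_eq',
      Finset.mem_univ, ↓reduceIte]
    ring
  have key := h.2 i τ hτ
  rw [profPay_update U i μ hμ, profPay_eq_sum U i μ hμ, hgain] at key
  exact sub_nonpos.1 (nonpos_of_mul_nonpos_right (by linarith) (sub_pos.2 hlt))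

theorem IsEpsEquilibrium.pos {ε μ : ∀ i, S i → ℝ} (h : IsEpsEquilibrium U ε μ)
    (hε : ∀ i x, 0 < ε i x) (i : ι) (x : S i) : 0 < μ i x :=
  (hε i x).trans_le ((h.1 i).2 x)

theorem IsEpsEquilibrium.eq_of_expPay_lt {ε μ : ∀ i, S i → ℝ} (h : IsEpsEquilibrium U ε μ)
    {i : ι} {si si' : S i} (hlt : expPay U i si (prodMix μ) < expPay U i si' (prodMix μ)) :
    μ i si = ε i si :=
  (((h.1 i).2 si).eq_or_lt.resolve_right fun h' => (h.expPay_le_of_lt h' si').not_gt hlt).symm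

end EpsEquilibrium

section Limits

variable {ι : Type} [Fintype ι] [DecidableEq ι] {S : ι → Type} [∀ i, Fintype (S i)]

theorem tendsto_profPay {α : Type} {l : Filter α} (U : ι → (∀ j, S j) → ℝ) (i : ι)
    {ν : α → ∀ j, S j → ℝ} {ν' : ∀ j, S j → ℝ}
    (hν : ∀ j x, Filter.Tendsto (fun t => ν t j x) l (nhds (ν' j x))) :
    Filter.Tendsto (fun t => profPay U i (ν t)) l (nhds (profPay U i ν')) :=
  tendsto_finsetSum _ fun s _ => (tendsto_finsetProd _ fun j _ => hν j (s j)).mul_const _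

theorem isNash_of_tendsto_isEpsEquilibrium {U : ι → (∀ j, S j) → ℝ}
    {ε σ : ℕ → ∀ i, S i → ℝ} {σstar : ∀ i, S i → ℝ}
    (hε : ∀ i si, Filter.Tendsto (fun t => ε t i si) Filter.atTop (nhds 0))
    (heq : ∀ t, IsEpsEquilibrium U (ε t) (σ t))
    (hσ : ∀ i si, Filter.Tendsto (fun t => σ t i si) Filter.atTop (nhds (σstar i si))) :
    IsNash U σstar := by
  have hσsum : ∀ t i, ∑ x, σ t i x = 1 := fun t i => ((heq t).1 i).1
  have hsum : ∀ i, ∑ x, σstar i x = 1 := fun i => by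
    have h := tendsto_finsetSum Finset.univ fun x _ => hσ i x
    simp only [hσsum] at h
    exact tendsto_nhds_unique h tendsto_const_nhds
  refine ⟨fun i => ⟨fun x => le_of_tendsto_of_tendsto' (hε i x) (hσ i x)
    fun t => ((heq t).1 i).2 x, hsum i⟩, fun i τ hτ0 hτ1 => ?_⟩
  -- `τ` is the limit of the admissible deviations `ε t i + (1 - ∑ ε t i) • τ`
  let τt : ℕ → S i → ℝ := fun t x => ε t i x + (1 - ∑ y, ε t i y) * τ x
  have hτt : ∀ t, InTrembleSet (ε t) i (τt t) := fun t => by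
    have hεsum : ∑ y, ε t i y ≤ 1 :=
      hσsum t i ▸ Finset.sum_le_sum fun x _ => ((heq t).1 i).2 x
    refine ⟨by simp [τt, Finset.sum_add_distrib, ← Finset.mul_sum, hτ1], fun x => ?_⟩
    nlinarith [hτ0 x]
  have hlim : ∀ j x, Filter.Tendsto (fun t => Function.update (σ t) i (τt t) j x)
      Filter.atTop (nhds (Function.update σstar i τ j x)) := by
    intro j x
    by_cases hj : j = i
    · subst hj
      have hεsum := tendsto_finsetSum Finset.univ fun y _ => hε j y
      simpa [τt] using
        (hε j x).add (((tendsto_const_nhds (x := (1 : ℝ))).sub hεsum).mul_const (τ x))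
    · simpa [Function.update_of_ne hj] using hσ j x
  exact le_of_tendsto_of_tendsto' (tendsto_profPay U i hlim) (tendsto_profPay U i hσ)
    fun t => (heq t).2 i _ (hτt t)

end Limits

section Marginals

variable {ι : Type} [Fintype ι] [DecidableEq ι] {S : ι → Type} [∀ i, Fintype (S i)]

theorem sum_sum_update (i : ι) (h : (∀ j, S j) → ℝ) :
    ∑ s, ∑ x : S i, h (Function.update s i x) = Fintype.card (S i) * ∑ s, h s := by
  rw [sum_piSplitAt i, sum_piSplitAt i h]
  simp only [update_piSplitAt_symm, Finset.sum_const, Finset.card_univ, nsmul_eq_mul]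
  rw [Finset.sum_comm]

theorem SameMarginal.sum_mul_eq {i j : ι} [Nonempty (S i)] [Nonempty (S j)]
    {σ τ : (∀ k, S k) → ℝ} (hm : SameMarginal i j σ τ) {F : (∀ k, S k) → ℝ}
    (hFi : ∀ s x, F (Function.update s i x) = F s)
    (hFj : ∀ s y, F (Function.update s j y) = F s) :
    ∑ s, σ s * F s = ∑ s, τ s * F s := by
  have hsmooth : ∀ ρ : (∀ k, S k) → ℝ,
      (Fintype.card (S i) * Fintype.card (S j) : ℝ) * ∑ s, ρ s * F s
        = ∑ s, (∑ x : S i, ∑ y : S j, ρ (Function.update (Function.update s i x) j y)) * F s := by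
    intro ρ
    rw [mul_assoc, ← sum_sum_update j,
      ← sum_sum_update i fun s =>
        ∑ y : S j, ρ (Function.update s j y) * F (Function.update s j y)]
    simp only [Finset.sum_mul, hFi, hFj]
  have hcard : (Fintype.card (S i) * Fintype.card (S j) : ℝ) ≠ 0 := by positivity
  refine mul_left_cancel₀ hcard ?_
  rw [hsmooth, hsmooth]
  exact Finset.sum_congr rfl fun s _ => by rw [hm s]

end Marginals

theorem sum_mul_comp_eq_sum_fiber {β γ : Type} [Fintype β] [Fintype γ] [DecidableEq γ]
    (w : β → ℝ) (h : β → γ) (g : γ → ℝ) :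
    ∑ b, w b * g (h b) = ∑ c, (∑ b, if h b = c then w b else 0) * g c := by
  simp only [Finset.sum_mul, ite_mul, zero_mul]
  rw [Finset.sum_comm]
  simp

section Signaling

variable {Θ Sig Act : Type} [Fintype Θ] [Fintype Sig] [Fintype Act]
  [DecidableEq Θ] [DecidableEq Sig] [DecidableEq Act]

/-- Agent-form strategy sets of the signaling game: each sender type chooses a signal;
the receiver (player `none`) chooses a signal-contingent plan. -/
def SigStrat (Θ Sig Act : Type) : Option Θ → Type
  | some _ => Sig
  | none => Sig → Act

instance : ∀ p : Option Θ, Fintype (SigStrat Θ Sig Act p)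
  | some _ => inferInstanceAs (Fintype Sig)
  | none => inferInstanceAs (Fintype (Sig → Act))

/-- Agent-form utilities of the signaling game: each sender type is a separate player,
the receiver's payoff averages over types with the prior `lam`. -/
def sigU (u1 u2 : Sig → Act → Θ → ℝ) (lam : Θ → ℝ) :
    (p : Option Θ) → (∀ q : Option Θ, SigStrat Θ Sig Act q) → ℝ
  | some θ, prof => u1 (prof (some θ)) (prof none (prof (some θ))) θ
  | none, prof => ∑ θ, lam θ * u2 (prof (some θ)) (prof none (prof (some θ))) θ

/-- Sender's expected payoff from signal `s` against a behavioral receiver strategy. -/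
def behPay (u1 : Sig → Act → Θ → ℝ) (s : Sig) (σ2 : Sig → Act → ℝ) (θ : Θ) : ℝ :=
  ∑ a, σ2 s a * u1 s a θ

/-- `sstar` is more type-compatible with `θ` than with `θ'`. -/
def TypeCompat (u1 : Sig → Act → Θ → ℝ) (sstar : Sig) (θ θ' : Θ) : Prop :=
  ∀ σ2 : Sig → Act → ℝ, (∀ s a, 0 < σ2 s a) → (∀ s, ∑ a, σ2 s a = 1) →
    (∀ s' : Sig, s' ≠ sstar → behPay u1 s' σ2 θ' ≤ behPay u1 sstar σ2 θ') →
    (∀ s' : Sig, s' ≠ sstar → behPay u1 s' σ2 θ < behPay u1 sstar σ2 θ)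

end Signaling

section AgentForm

variable {Θ Sig Act : Type} [Fintype Θ] [DecidableEq Θ]
  {u1 u2 : Sig → Act → Θ → ℝ} {lam : Θ → ℝ}

theorem sigU_some_update (θ : Θ) (x : Sig)
    (prof : ∀ q : Option Θ, SigStrat Θ Sig Act q) :
    sigU u1 u2 lam (some θ) (Function.update prof (some θ) x) = u1 x (prof none x) θ := by
  simp only [sigU]
  erw [Function.update_self, Function.update_of_ne (Option.some_ne_none θ).symm]

theorem sigU_none_update (c : Sig → Act) (prof : ∀ q : Option Θ, SigStrat Θ Sig Act q) :
    sigU u1 u2 lam none (Function.update prof none c)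
      = ∑ θ, lam θ * u2 (prof (some θ)) (c (prof (some θ))) θ := by
  simp only [sigU]
  refine Finset.sum_congr rfl fun θ _ => ?_
  erw [Function.update_self, Function.update_of_ne (Option.some_ne_none θ)]

end AgentForm

section Receiver

variable {Θ Sig Act : Type} [Fintype Θ] [Fintype Sig] [Fintype Act]
  [DecidableEq Θ] [DecidableEq Sig] {u1 u2 : Sig → Act → Θ → ℝ} {lam : Θ → ℝ}

theorem expPay_none_prodMix (c : Sig → Act) {μ : ∀ q : Option Θ, SigStrat Θ Sig Act q → ℝ}
    (hμ : ∀ q, ∑ x, μ q x = 1) :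
    expPay (sigU u1 u2 lam) none c (prodMix μ)
      = ∑ x, ∑ θ, lam θ * μ (some θ) x * u2 x (c x) θ := by
  simp only [expPay, sigU_none_update, Finset.mul_sum]
  rw [Finset.sum_comm, Finset.sum_comm (γ := Sig)]
  refine Finset.sum_congr rfl fun θ _ => ?_
  refine (sum_prodMix_mul_apply μ hμ (some θ) fun y : Sig => lam θ * u2 y (c y) θ).trans ?_
  exact Finset.sum_congr rfl fun x _ => by ring

theorem IsEpsEquilibrium.plan_optimal_of_lt {ε μ : ∀ q : Option Θ, SigStrat Θ Sig Act q → ℝ}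
    (heq : IsEpsEquilibrium (sigU u1 u2 lam) ε μ) {plan : Sig → Act}
    (hlt : ε none plan < μ none plan) (s : Sig) (a : Act) :
    ∑ θ, lam θ * μ (some θ) s * u2 s a θ ≤ ∑ θ, lam θ * μ (some θ) s * u2 s (plan s) θ := by
  have hμ : ∀ q, ∑ x, μ q x = 1 := fun q => (heq.1 q).1
  have h := heq.expPay_le_of_lt hlt (Function.update plan s a)
  have hrest : ∑ x ∈ Finset.univ.erase s, ∑ θ,
        lam θ * μ (some θ) x * u2 x (Function.update plan s a x) θ
      = ∑ x ∈ Finset.univ.erase s, ∑ θ, lam θ * μ (some θ) x * u2 x (plan x) θ :=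
    Finset.sum_congr rfl fun x hx => by rw [Function.update_of_ne (Finset.ne_of_mem_erase hx)]
  rw [expPay_none_prodMix _ hμ, expPay_none_prodMix _ hμ,
    ← Finset.add_sum_erase _ _ (Finset.mem_univ s),
    ← Finset.add_sum_erase _ _ (Finset.mem_univ s), hrest, Function.update_self] at h
  linarith

end Receiver

section Criterion

variable {Θ Sig Act : Type} [Fintype Θ] [Fintype Sig] [Fintype Act]
  [DecidableEq Θ] [DecidableEq Sig] [DecidableEq Act]
  {u1 u2 : Sig → Act → Θ → ℝ} {lam : Θ → ℝ}

def inducedBehavior (σ : (∀ q : Option Θ, SigStrat Θ Sig Act q) → ℝ) (x : Sig) (a : Act) : ℝ :=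
  ∑ prof, if (prof none : Sig → Act) x = a then σ prof else 0

theorem inducedBehavior_pos {σ : (∀ q : Option Θ, SigStrat Θ Sig Act q) → ℝ}
    (hσ : ∀ prof, 0 < σ prof) (x : Sig) (a : Act) : 0 < inducedBehavior σ x a := by
  let prof₀ : ∀ q : Option Θ, SigStrat Θ Sig Act q := fun | some _ => x | none => fun _ => a
  refine Finset.sum_pos' (fun prof _ => ite_nonneg (hσ prof).le le_rfl)
    ⟨prof₀, Finset.mem_univ _, ?_⟩
  rw [if_pos rfl]
  exact hσ prof₀

theorem sum_inducedBehavior (σ : (∀ q : Option Θ, SigStrat Θ Sig Act q) → ℝ) (x : Sig) :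
    ∑ a, inducedBehavior σ x a = ∑ prof, σ prof := by
  simp only [inducedBehavior]
  rw [Finset.sum_comm]
  simp

theorem expPay_some_eq_behPay (θ : Θ) (x : Sig)
    (σ : (∀ q : Option Θ, SigStrat Θ Sig Act q) → ℝ) :
    expPay (sigU u1 u2 lam) (some θ) x σ = behPay u1 x (inducedBehavior σ) θ := by
  simp only [expPay, sigU_some_update, behPay, inducedBehavior]
  exact sum_mul_comp_eq_sum_fiber σ (fun prof => prof none x) (fun a => u1 x a θ)

theorem TypeCompat.moreCompatible {s : Sig} {θ θ' : Θ} (hTC : TypeCompat u1 s θ θ') :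
    MoreCompatible (sigU u1 u2 lam) (some θ) (some θ') s s := by
  intro σ hσ hbest τ _ hm si' hne
  have : Nonempty (SigStrat Θ Sig Act (some θ)) := ⟨(s : Sig)⟩
  have : Nonempty (SigStrat Θ Sig Act (some θ')) := ⟨(s : Sig)⟩
  -- `θ`'s payoffs depend on the profile only through the receiver's marginal, fixed by `hm`
  have hpay : ∀ x : Sig,
      expPay (sigU u1 u2 lam) (some θ) x τ = behPay u1 x (inducedBehavior σ) θ := fun x => by
    rw [← expPay_some_eq_behPay (u2 := u2) (lam := lam)]
    simp only [expPay, sigU_some_update]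
    exact (hm.sum_mul_eq (F := fun prof => u1 x (prof none x) θ) (fun _ _ => by simp)
      (fun _ _ => by simp)).symm
  rw [hpay si', hpay s]
  refine hTC _ (inducedBehavior_pos hσ.1) (fun x => by rw [sum_inducedBehavior, hσ.2])
    (fun s' _ => ?_) si' hne
  have h := hbest s'
  rwa [expPay_some_eq_behPay θ' (s' : Sig), expPay_some_eq_behPay θ' s] at h

theorem PlayerCompatibleTremble.le_of_typeCompat {ε : ∀ q : Option Θ, SigStrat Θ Sig Act q → ℝ}
    (h : PlayerCompatibleTremble (sigU u1 u2 lam) ε) {s : Sig} {θ θ' : Θ}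
    (hTC : TypeCompat u1 s θ θ') : ε (some θ') s ≤ ε (some θ) s := by
  by_cases hθ : θ = θ'
  · subst hθ; exact le_rfl
  · exact h.2 (some θ) (some θ') s s (by simpa using hθ) hTC.moreCompatible

theorem IsEpsEquilibrium.mul_one_sub_le_of_typeCompat
    {ε μ : ∀ q : Option Θ, SigStrat Θ Sig Act q → ℝ}
    (heq : IsEpsEquilibrium (sigU u1 u2 lam) ε μ) (hε : ∀ q x, 0 < ε q x) {s : Sig}
    {θ θ' : Θ} (hTC : TypeCompat u1 s θ θ')
    (hεle : ε (some θ') s ≤ ε (some θ) s) :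
    μ (some θ') s * (1 - ∑ x ∈ Finset.univ.erase s, ε (some θ) x) ≤ μ (some θ) s := by
  have hμ : ∀ q, ∑ x, μ q x = 1 := fun q => (heq.1 q).1
  have hge : ∀ q x, ε q x ≤ μ q x := fun q x => (heq.1 q).2 x
  have hμpos := heq.pos hε
  have hpay : ∀ (θ'' : Θ) (x : Sig), expPay (sigU u1 u2 lam) (some θ'') x (prodMix μ)
      = behPay u1 x (inducedBehavior (prodMix μ)) θ'' := fun θ'' x =>
    expPay_some_eq_behPay θ'' x _
  have hE : 0 ≤ ∑ x ∈ Finset.univ.erase s, ε (some θ) x :=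
    Finset.sum_nonneg fun x _ => (hε (some θ) x).le
  by_cases hbest : ∀ s' : Sig, s' ≠ s → behPay u1 s' (inducedBehavior (prodMix μ)) θ'
      ≤ behPay u1 s (inducedBehavior (prodMix μ)) θ'
  · -- then `s` is strictly optimal for `θ`, who sends every other signal only by tremble
    have hfull := fullSupport_prodMix μ hμpos hμ
    have hstrict := hTC _ (inducedBehavior_pos hfull.1)
      (fun x => by rw [sum_inducedBehavior, hfull.2]) hbest
    have hfloor : ∀ x ∈ Finset.univ.erase s, μ (some θ) x = ε (some θ) x := fun x hx =>
      heq.eq_of_expPay_lt (si' := (s : Sig)) <| by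
        rw [hpay, hpay]; exact hstrict x (Finset.ne_of_mem_erase hx)
    have hμs : μ (some θ) s = 1 - ∑ x ∈ Finset.univ.erase s, ε (some θ) x := by
      have hsplit :=
        Finset.add_sum_erase Finset.univ (fun x : Sig => μ (some θ) x) (Finset.mem_univ s)
      have hone : ∑ x : Sig, μ (some θ) x = 1 := hμ (some θ)
      rw [Finset.sum_congr rfl hfloor] at hsplit
      linarith
    have hle1 : μ (some θ') s ≤ 1 := by
      have hone : ∑ x : Sig, μ (some θ') x = 1 := hμ (some θ')
      exact hone ▸ Finset.single_le_sum (fun x _ => (hμpos (some θ') x).le) (Finset.mem_univ s)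
    rw [hμs]
    exact mul_le_of_le_one_left (hμs ▸ (hμpos (some θ) s).le) hle1
  · push Not at hbest
    obtain ⟨s', -, hs'⟩ := hbest
    have hfloor : μ (some θ') s = ε (some θ') s :=
      heq.eq_of_expPay_lt (si' := (s' : Sig)) <| by rw [hpay, hpay]; exact hs'
    calc μ (some θ') s * (1 - ∑ x ∈ Finset.univ.erase s, ε (some θ) x)
        ≤ μ (some θ') s := mul_le_of_le_one_right (hμpos (some θ') s).le (by linarith)
      _ = ε (some θ') s := hfloor
      _ ≤ ε (some θ) s := hεle
      _ ≤ μ (some θ) s := hge (some θ) s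

end Criterion

theorem le_of_tendsto_of_mul_one_sub_le {α : Type} {l : Filter α} [l.NeBot] {x y e : α → ℝ}
    {a b : ℝ} (hx : Filter.Tendsto x l (nhds a)) (hy : Filter.Tendsto y l (nhds b))
    (he : Filter.Tendsto e l (nhds 0)) (h : ∀ k, x k * (1 - e k) ≤ y k) : a ≤ b :=
  le_of_tendsto_of_tendsto' (by simpa using hx.mul (tendsto_const_nhds (x := (1 : ℝ)) |>.sub he))
    hy h

section Posterior

variable {Θ Sig Act : Type} [Fintype Θ] {lam : Θ → ℝ}
  {μ : ∀ q : Option Θ, SigStrat Θ Sig Act q → ℝ} {s : Sig}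

def posterior (lam : Θ → ℝ) (μ : ∀ q : Option Θ, SigStrat Θ Sig Act q → ℝ) (s : Sig) (θ : Θ) :
    ℝ :=
  lam θ * μ (some θ) s / ∑ θ', lam θ' * μ (some θ') s

theorem posterior_mem_stdSimplex [Nonempty Θ] (hlam : ∀ θ, 0 < lam θ)
    (hμ : ∀ θ, 0 < μ (some θ) s) : posterior lam μ s ∈ stdSimplex ℝ Θ := by
  have hD : 0 < ∑ θ, lam θ * μ (some θ) s :=
    Finset.sum_pos (fun θ _ => mul_pos (hlam θ) (hμ θ)) Finset.univ_nonempty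
  refine ⟨fun θ => div_nonneg (mul_pos (hlam θ) (hμ θ)).le hD.le, ?_⟩
  simp only [posterior, ← Finset.sum_div, div_self hD.ne']

theorem posterior_mul_le {θ θ' : Θ} {c : ℝ} (hlam : ∀ θ, 0 ≤ lam θ)
    (hμ : ∀ θ, 0 ≤ μ (some θ) s) (h : μ (some θ') s * c ≤ μ (some θ) s) :
    posterior lam μ s θ' * lam θ * c ≤ posterior lam μ s θ * lam θ' := by
  have hD : 0 ≤ ∑ θ, lam θ * μ (some θ) s :=
    Finset.sum_nonneg fun θ _ => mul_nonneg (hlam θ) (hμ θ)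
  simp only [posterior, div_mul_eq_mul_div]
  refine div_le_div_of_nonneg_right ?_ hD
  nlinarith [mul_le_mul_of_nonneg_left h (mul_nonneg (hlam θ) (hlam θ'))]

theorem sum_posterior_mul_le {f g : Θ → ℝ} (hlam : ∀ θ, 0 ≤ lam θ)
    (hμ : ∀ θ, 0 ≤ μ (some θ) s)
    (h : ∑ θ, lam θ * μ (some θ) s * f θ ≤ ∑ θ, lam θ * μ (some θ) s * g θ) :
    ∑ θ, posterior lam μ s θ * f θ ≤ ∑ θ, posterior lam μ s θ * g θ := by
  have hD : 0 ≤ ∑ θ, lam θ * μ (some θ) s :=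
    Finset.sum_nonneg fun θ _ => mul_nonneg (hlam θ) (hμ θ)
  simp only [posterior, div_mul_eq_mul_div, ← Finset.sum_div]
  exact div_le_div_of_nonneg_right h hD

end Posterior

section Signaling

variable {Θ Sig Act : Type} [Fintype Θ] [Fintype Sig] [Fintype Act]
  [DecidableEq Θ] [DecidableEq Sig] [DecidableEq Act]

/-- In a signaling game, every PCE is a Nash equilibrium satisfying the compatibility
criterion: every receiver plan used with positive probability prescribes after each
signal `s` an action that best responds to a belief `p` with
`p(θ)/p(θ') ≥ λ(θ)/λ(θ')` whenever `s` is more type-compatible with `θ` than `θ'`. -/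
theorem pce_satisfies_compatibility_criterion
    (u1 u2 : Sig → Act → Θ → ℝ) (lam : Θ → ℝ)
    (hlam : ∀ θ, 0 < lam θ) (hlamsum : ∑ θ, lam θ = 1)
    (σstar : ∀ p : Option Θ, SigStrat Θ Sig Act p → ℝ)
    (hPCE : IsPCE (sigU u1 u2 lam) σstar) :
    IsNash (sigU u1 u2 lam) σstar ∧
    ∀ plan : Sig → Act, 0 < σstar none plan → ∀ s : Sig,
      ∃ p : Θ → ℝ, (∀ θ, 0 ≤ p θ) ∧ (∑ θ, p θ = 1) ∧
        (∀ θ θ', TypeCompat u1 s θ θ' → p θ' * lam θ ≤ p θ * lam θ') ∧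
        (∀ a : Act, ∑ θ, p θ * u2 s a θ ≤ ∑ θ, p θ * u2 s (plan s) θ) := by
  obtain ⟨ε, σ, hcompat, hε0, heq, hlim⟩ := hPCE
  refine ⟨isNash_of_tendsto_isEpsEquilibrium hε0 heq hlim, fun plan hplan s => ?_⟩
  have hσ : ∀ k θ, 0 ≤ σ k (some θ) s := fun k θ => ((heq k).pos (hcompat k).1 (some θ) s).le
  have hlam' : ∀ θ, 0 ≤ lam θ := fun θ => (hlam θ).le
  have : Nonempty Θ :=
    let ⟨θ, _⟩ := Finset.exists_ne_zero_of_sum_ne_zero (hlamsum.trans_ne one_ne_zero); ⟨θ⟩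
  obtain ⟨p, hp, φ, hφ, hconv⟩ := (isCompact_stdSimplex ℝ Θ).tendsto_subseq fun k =>
    posterior_mem_stdSimplex (μ := σ k) (s := s) hlam fun θ => (heq k).pos (hcompat k).1 (some θ) s
  refine ⟨p, hp.1, hp.2, fun θ θ' hTC => ?_, fun a => ?_⟩
  · have hE : Filter.Tendsto (fun k => ∑ x ∈ Finset.univ.erase s, ε k (some θ) x)
        Filter.atTop (nhds 0) := by
      simpa using tendsto_finsetSum (Finset.univ.erase s) fun x _ => hε0 (some θ) x
    refine le_of_tendsto_of_mul_one_sub_le ((tendsto_pi_nhds.1 hconv θ').mul_const _)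
      ((tendsto_pi_nhds.1 hconv θ).mul_const _) (hE.comp hφ.tendsto_atTop) fun k =>
        posterior_mul_le hlam' (hσ (φ k)) ?_
    exact (heq _).mul_one_sub_le_of_typeCompat (hcompat _).1 hTC
      ((hcompat _).le_of_typeCompat hTC)
  · have hclosed : IsClosed {q : Θ → ℝ | ∑ θ, q θ * u2 s a θ ≤ ∑ θ, q θ * u2 s (plan s) θ} :=
      isClosed_le (by fun_prop) (by fun_prop)
    refine hclosed.mem_of_tendsto hconv ?_
    filter_upwards [hφ.tendsto_atTop.eventually
      ((hε0 none plan).eventually_lt (hlim none plan) hplan)] with k hk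
    exact sum_posterior_mul_le hlam' (hσ (φ k)) ((heq _).plan_optimal_of_lt hk s a)

end Signaling

end
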